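/- arXiv:2505.16632 — 3 statements merged into one kernel-verified Lean document; each statement's English description precedes it below -/
import Mathlib

section
/- Let d ≥ 4 and l ≥ 2 be integers with d ≥ 3l-2. Then there is a unique tuple of complex numbers (b_0, …, b_{l-2}, a_{d-l+1}, …, a_d) such that the polynomial p(z) = b_0 + b_1 z + ⋯ + b_{l-2} z^{l-2} + z^{l-1} + a_{d-l+1} z^{d-l+1} + ⋯ + a_d z^d is divisible by (z-1)^{2l-1}. -/
open Polynomial

/-!
A nonzero polynomial with `n` nonzero terms vanishes to order less than `n` at any `a ≠ 0`:
the operator `p ↦ X p' - c p` kills the monomial of degree `c`, keeps the other terms, and lowers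
the order of vanishing at `a` by at most one. Hence a nonzero combination of `n` distinct monomials
is never divisible by `(X - a)^n`, i.e. the square linear system for the coefficients is injective,
so bijective.
-/

open Finset Function

namespace Polynomial

section Semiring

variable {R : Type*} [Semiring R] {ι : Type*} [Fintype ι] {e : ι → ℕ}

theorem coeff_sum_C_mul_X_pow (he : Injective e) (c : ι → R) (i : ι) :
    (∑ j, C (c j) * X ^ e j).coeff (e i) = c i := by
  classical
  simp_rw [finsetSum_coeff, coeff_C_mul_X_pow, he.eq_iff]
  simp

theorem card_support_sum_C_mul_X_pow_le (c : ι → R) :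
    #(∑ j, C (c j) * X ^ e j).support ≤ Fintype.card ι := by
  classical
  calc #(∑ j, C (c j) * X ^ e j).support ≤ #(univ.image e) := by
        refine card_le_card fun k hk => ?_
        by_contra hk_image
        rw [mem_support_iff, finsetSum_coeff] at hk
        refine hk (sum_eq_zero fun j _ => ?_)
        rw [coeff_C_mul_X_pow, if_neg]
        rintro rfl
        exact hk_image (mem_image_of_mem e (mem_univ j))
    _ ≤ Fintype.card ι := card_image_le

end Semiring

section CommRing

variable {R : Type*} [CommRing R]

theorem coeff_X_mul_derivative_sub_C_mul (p : R[X]) (c k : ℕ) :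
    (X * derivative p - C (c : R) * p).coeff k = ((k : R) - c) * p.coeff k := by
  cases k with
  | zero => simp [mul_coeff_zero]
  | succ k =>
    rw [coeff_sub, coeff_X_mul, coeff_derivative, coeff_C_mul]
    push_cast
    ring

variable [IsDomain R] [CharZero R]

theorem rootMultiplicity_lt_card_support {p : R[X]} (hp : p ≠ 0) {a : R} (ha : a ≠ 0) :
    p.rootMultiplicity a < #p.support := by
  induction hn : #p.support using Nat.strong_induction_on generalizing p with
  | _ n ih =>
    obtain ⟨c, hc⟩ := nonempty_support_iff.mpr hp
    set q := X * derivative p - C (c : R) * p with hq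
    have hcoeff := coeff_X_mul_derivative_sub_C_mul p c
    have hq_support : q.support ⊆ p.support.erase c := by
      intro k hk
      rw [mem_support_iff, hcoeff] at hk
      refine mem_erase.mpr ⟨?_, mem_support_iff.mpr (right_ne_zero_of_mul hk)⟩
      rintro rfl
      simp at hk
    by_cases hq0 : q = 0
    · have hmonomial : p = C (p.coeff c) * X ^ c := by
        ext k
        rw [coeff_C_mul_X_pow]
        split_ifs with hkc
        · rw [hkc]
        · have := hcoeff k
          rw [← hq, hq0, coeff_zero, eq_comm, mul_eq_zero, sub_eq_zero, Nat.cast_inj] at this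
          exact this.resolve_left hkc
      have hroot : ¬p.IsRoot a := by
        rw [hmonomial, IsRoot, eval_C_mul, eval_X_pow]
        exact mul_ne_zero (mem_support_iff.mp hc) (pow_ne_zero _ ha)
      rw [rootMultiplicity_eq_zero hroot, ← hn]
      exact card_pos.mpr ⟨c, hc⟩
    · have hdvd : (X - C a) ^ (p.rootMultiplicity a - 1) ∣ q :=
        ((pow_sub_one_dvd_derivative_of_pow_dvd (pow_rootMultiplicity_dvd p a)).mul_left X).sub
          (((pow_dvd_pow _ (Nat.sub_le _ 1)).trans (pow_rootMultiplicity_dvd p a)).mul_left _)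
      have hq_mult := (le_rootMultiplicity_iff hq0).mpr hdvd
      have hq_card : #q.support < n := by
        have := card_le_card hq_support
        rw [card_erase_of_mem hc] at this
        have := card_pos.mpr ⟨c, hc⟩
        omega
      have := ih _ hq_card hq0 rfl
      omega

theorem eq_zero_of_pow_dvd_of_card_support_le {p : R[X]} {a : R} (ha : a ≠ 0) {n : ℕ}
    (hdvd : (X - C a) ^ n ∣ p) (hcard : #p.support ≤ n) : p = 0 := by
  by_contra hp
  have := (le_rootMultiplicity_iff hp).mpr hdvd
  have := rootMultiplicity_lt_card_support hp ha
  omega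

theorem eq_zero_of_pow_dvd_sum_C_mul_X_pow {ι : Type*} [Fintype ι] {e : ι → ℕ} (he : Injective e)
    {a : R} (ha : a ≠ 0) {c : ι → R}
    (hdvd : (X - C a) ^ Fintype.card ι ∣ ∑ j, C (c j) * X ^ e j) : c = 0 := by
  have hsum := eq_zero_of_pow_dvd_of_card_support_le ha hdvd (card_support_sum_C_mul_X_pow_le c)
  funext i
  rw [← coeff_sum_C_mul_X_pow he c i, hsum, coeff_zero, Pi.zero_apply]

end CommRing

theorem existsUnique_pow_dvd_add_sum_C_mul_X_pow {K : Type*} [Field K] [CharZero K]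
    {ι : Type*} [Fintype ι] {e : ι → ℕ} (he : Injective e) {a : K} (ha : a ≠ 0) (f : K[X]) :
    ∃! c : ι → K, (X - C a) ^ Fintype.card ι ∣ f + ∑ j, C (c j) * X ^ e j := by
  set M := (X - C a) ^ Fintype.card ι
  let T : (ι → K) →ₗ[K] K[X] ⧸ Ideal.span {M} :=
    (Ideal.Quotient.mkₐ K (Ideal.span {M})).toLinearMap ∘ₗ
      Fintype.linearCombination K fun j => X ^ e j
  have hT (c : ι → K) : T c = Ideal.Quotient.mk _ (∑ j, C (c j) * X ^ e j) := by
    simp [T, Fintype.linearCombination_apply, smul_eq_C_mul]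
  have hT_injective : Injective T := by
    refine (injective_iff_map_eq_zero T).mpr fun c hc => ?_
    rw [hT, Ideal.Quotient.eq_zero_iff_dvd] at hc
    exact eq_zero_of_pow_dvd_sum_C_mul_X_pow he ha hc
  have : Module.Finite K (K[X] ⧸ Ideal.span {M}) := ((monic_X_sub_C a).pow _).finite_quotient
  have hfinrank : Module.finrank K (ι → K) = Module.finrank K (K[X] ⧸ Ideal.span {M}) := by
    rw [finrank_quotient_span_eq_natDegree, natDegree_pow, natDegree_X_sub_C, mul_one,
      Module.finrank_fintype_fun_eq_card]
  have hT_bijective : Bijective T :=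
    ⟨hT_injective,
      (LinearMap.injective_iff_surjective_of_finrank_eq_finrank hfinrank).mp hT_injective⟩
  refine (existsUnique_congr fun c => ?_).mp (hT_bijective.existsUnique (-Ideal.Quotient.mk _ f))
  rw [hT, eq_neg_iff_add_eq_zero, ← map_add, Ideal.Quotient.eq_zero_iff_dvd, add_comm]

end Polynomial

theorem exists_unique_coefficients_general (d l : ℕ)
    (hdl : 3 * l - 2 ≤ d) :
    ∃! ba : (Fin (l - 1) → ℂ) × (Fin l → ℂ),
      ((X : ℂ[X]) - 1) ^ (2 * l - 1) ∣
        (∑ i : Fin (l - 1), C (ba.1 i) * X ^ (i : ℕ)) + X ^ (l - 1) +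
          ∑ i : Fin l, C (ba.2 i) * X ^ (d - l + 1 + (i : ℕ)) := by
  let e : Fin (l - 1) ⊕ Fin l → ℕ := Sum.elim (↑) fun i => d - l + 1 + i
  have he : Injective e := by
    rintro (i | i) (j | j) h <;> simp only [e, Sum.elim_inl, Sum.elim_inr] at h
    · exact congrArg Sum.inl (Fin.ext h)
    · have := i.isLt
      omega
    · have := j.isLt
      omega
    · exact congrArg Sum.inr (Fin.ext (by omega))
  have hcard : Fintype.card (Fin (l - 1) ⊕ Fin l) = 2 * l - 1 := by
    rw [Fintype.card_sum, Fintype.card_fin, Fintype.card_fin]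
    omega
  have key := existsUnique_pow_dvd_add_sum_C_mul_X_pow he one_ne_zero (X ^ (l - 1) : ℂ[X])
  rw [hcard, map_one] at key
  refine ((Equiv.sumArrowEquivProdArrow _ _ _).existsUnique_congr fun c => ?_).mp key
  refine Iff.of_eq (congrArg _ ?_)
  simp only [Fintype.sum_sum_type, e, Sum.elim_inl, Sum.elim_inr,
    Equiv.sumArrowEquivProdArrow_apply_fst, Equiv.sumArrowEquivProdArrow_apply_snd]
  ring

/-- There is a unique choice of coefficients `b_0, …, b_{l-2}, a_{d-l+1}, …, a_d`
such that `b_0 + b_1 z + ⋯ + b_{l-2} z^(l-2) + z^(l-1) + a_{d-l+1} z^(d-l+1) + ⋯ + a_d z^d`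
is divisible by `(z-1)^(2l-1)`. -/
theorem exists_unique_coefficients (d l : ℕ) (hd : 4 ≤ d) (hl : 2 ≤ l)
    (hdl : 3 * l - 2 ≤ d) :
    ∃! ba : (Fin (l - 1) → ℂ) × (Fin l → ℂ),
      ((X : ℂ[X]) - 1) ^ (2 * l - 1) ∣
        (∑ i : Fin (l - 1), C (ba.1 i) * X ^ (i : ℕ)) + X ^ (l - 1) +
          ∑ i : Fin l, C (ba.2 i) * X ^ (d - l + 1 + (i : ℕ)) :=
  exists_unique_coefficients_general d l hdl
end

section
/- Let p be a complex number with p ≠ 0 and p ≠ 1. There exist complex numbers a_4, a_5, a_6 satisfying the four equations a_6 + a_5 + a_4 + 1 = 0, 6a_6 + 5a_5 + 4a_4 = 0, a_6 p^6 + a_5 p^5 + a_4 p^4 + p = 0, and 6a_6 p^5 + 5a_5 p^4 + 4a_4 p^3 = 0, if and only if 2p^4 - p^3 - p^2 - p + 2 = 0. -/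
/-- For `p ∉ {0,1}`, the four equations determining a degree-6 homogeneous convex
foliation of type `2·R₁ + 1·R₃ + 1·R₅` are solvable iff `2p⁴ - p³ - p² - p + 2 = 0`. -/
theorem solvable_iff_quartic (p : ℂ) (hp0 : p ≠ 0) (hp1 : p ≠ 1) :
    (∃ a4 a5 a6 : ℂ,
        a6 + a5 + a4 + 1 = 0 ∧
        6 * a6 + 5 * a5 + 4 * a4 = 0 ∧
        a6 * p ^ 6 + a5 * p ^ 5 + a4 * p ^ 4 + p = 0 ∧
        6 * a6 * p ^ 5 + 5 * a5 * p ^ 4 + 4 * a4 * p ^ 3 = 0) ↔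
      2 * p ^ 4 - p ^ 3 - p ^ 2 - p + 2 = 0 := by
  have hpm1 : p - 1 ≠ 0 := sub_ne_zero.mpr hp1
  constructor
  · rintro ⟨a4, a5, a6, h1, h2, h3, h4⟩
    have key : (2 * p ^ 4 - p ^ 3 - p ^ 2 - p + 2) * (2 * p ^ 4 * (p - 1) ^ 2) = 0 := by
      linear_combination
        2 * p ^ 3 * (p - 1) * (3 * p - 2) *
            (h3 - p ^ 5 * (h2 - 4 * h1) - p ^ 4 * (5 * h1 - h2)) -
          p ^ 4 * (p - 1) ^ 2 *
            (h4 - 5 * p ^ 4 * (h2 - 4 * h1) - 4 * p ^ 3 * (5 * h1 - h2))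
    have hne : (2 : ℂ) * p ^ 4 * (p - 1) ^ 2 ≠ 0 := by
      simp [hp0, hpm1]
    exact (mul_eq_zero.mp key).resolve_right hne
  · intro hq
    have h32 : 3 * p - 2 ≠ 0 := by
      intro h
      have hp : p = 2 / 3 := by linear_combination h / 3
      rw [hp] at hq
      norm_num at hq
    refine ⟨-10 / (3 * p - 2) - 5, 4 - 2 * (-10 / (3 * p - 2)), -10 / (3 * p - 2), ?_, ?_, ?_, ?_⟩
    · field_simp; ring
    · field_simp; ring
    · have e3 : -10 / (3 * p - 2) * p ^ 6 + (4 - 2 * (-10 / (3 * p - 2))) * p ^ 5 +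
          (-10 / (3 * p - 2) - 5) * p ^ 4 + p =
          p * (p - 1) * (2 * p ^ 4 - p ^ 3 - p ^ 2 - p + 2) / (3 * p - 2) := by
        field_simp; ring
      rw [e3, hq]; simp
    · field_simp; ring
end

section
/- Let d ≥ 1 and let A, B ∈ ℂ[x,y] be homogeneous polynomials of degree d. Then d·(A·B·(∂B/∂x + ∂A/∂y) - A^2·∂B/∂y - B^2·∂A/∂x) = -(xA + yB)·(∂A/∂x·∂B/∂y - ∂A/∂y·∂B/∂x). -/
open MvPolynomial

lemma X_mul_pderiv_monomial (i : Fin 2) (s : Fin 2 →₀ ℕ) (a : ℂ) :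
    X i * pderiv i (monomial s a) = monomial s (a * s i) := by
  rw [pderiv_monomial]
  rcases Nat.eq_zero_or_pos (s i) with h | h
  · simp [h]
  · have hs : Finsupp.single i 1 + (s - Finsupp.single i 1) = s := by
      ext j
      by_cases hj : j = i
      · subst hj; simp [Finsupp.single_apply]; omega
      · simp [Finsupp.single_apply, Ne.symm hj, hj]
    rw [X, monomial_mul, one_mul, hs]

lemma euler (d : ℕ) (f : MvPolynomial (Fin 2) ℂ) (hf : f.IsHomogeneous d) :
    X 0 * pderiv 0 f + X 1 * pderiv 1 f = (d : MvPolynomial (Fin 2) ℂ) * f := by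
  conv_lhs => rw [f.as_sum]
  conv_rhs => rw [f.as_sum]
  rw [map_sum, map_sum, Finset.mul_sum, Finset.mul_sum, Finset.mul_sum, ← Finset.sum_add_distrib]
  refine Finset.sum_congr rfl fun v hv => ?_
  rw [X_mul_pderiv_monomial, X_mul_pderiv_monomial, ← map_add,
    ← map_natCast (C : ℂ →+* MvPolynomial (Fin 2) ℂ) d, C_mul_monomial]
  have hdeg : v 0 + v 1 = d := by
    have := hf (mem_support_iff.mp hv)
    simpa [Finsupp.weight, Finsupp.linearCombination, Finsupp.sum_fintype,
      Fin.sum_univ_two] using this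
  congr 1
  have : ((d : ℂ)) = (v 0 : ℂ) + (v 1 : ℂ) := by exact_mod_cast hdeg.symm
  rw [this]; ring

/-- The inflection-divisor factorization identity for homogeneous `A, B` of degree `d`:
`d(AB(B_x + A_y) - A²B_y - B²A_x) = -(xA + yB)(A_x B_y - A_y B_x)`. -/
theorem inflection_factorization (d : ℕ) (hd : 1 ≤ d)
    (A B : MvPolynomial (Fin 2) ℂ)
    (hA : A.IsHomogeneous d) (hB : B.IsHomogeneous d) :
    (d : MvPolynomial (Fin 2) ℂ) *
        (A * B * (pderiv 0 B + pderiv 1 A) - A ^ 2 * pderiv 1 B -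
          B ^ 2 * pderiv 0 A) =
      -((X 0) * A + (X 1) * B) *
        (pderiv 0 A * pderiv 1 B - pderiv 1 A * pderiv 0 B) := by
  have eA := euler d A hA
  have eB := euler d B hB
  linear_combination (A * pderiv 1 B - B * pderiv 0 B) * eA +
    (B * pderiv 0 A - A * pderiv 1 A) * eB
end
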